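/- arXiv:2407.21212 — 2 statements merged into one kernel-verified Lean document; each statement's English description precedes it below -/
import Mathlib

section
/- Let $0<p<1$. Define $H, K : \mathbb{R} \to \mathbb{C}$ by $H(\theta) = \frac{1}{1-e^{i\theta}}$ and $K(\theta) = -\frac{1}{1+e^{i\theta}}$ (defined for almost every $\theta$). Then equality holds in the triangle inequality: $\left(\int_0^{2\pi} |H(\theta)+K(\theta)|^p \, \frac{d\theta}{2\pi}\right)^{1/p} = \left(\int_0^{2\pi} |H(\theta)|^p \, \frac{d\theta}{2\pi}\right)^{1/p} + \left(\int_0^{2\pi} |K(\theta)|^p \, \frac{d\theta}{2\pi}\right)^{1/p}$. (That is, for $h(z)=\frac{1}{1-z}$ and $k(z)=-h(-z)$ one has $\|h+k\|_{H^p} = \|h\|_{H^p} + \|k\|_{H^p}$.) -/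
/-!
On the unit circle `|k(z)| = |h(-z)|`, so rotating by `π` gives `‖k‖_p = ‖h‖_p`. Moreover
`h(z) + k(z) = 2z / (1 - z²) = 2z · h(z²)`, so `|h + k|^p = 2^p |h(z²)|^p` off `z = ±1`, and
`z ↦ z²` preserves normalized arc length. Hence `‖h + k‖_p = 2 ‖h‖_p = ‖h‖_p + ‖k‖_p`.
-/

open MeasureTheory

namespace Function.Periodic

variable {E : Type*} [NormedAddCommGroup E] [NormedSpace ℝ E] {f : ℝ → E} {T : ℝ}

/-- Unlike `Function.Periodic.intervalIntegral_add_zsmul_eq`, no integrability is assumed: if `f`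
is not integrable over one period, both sides vanish. -/
theorem intervalIntegral_nat_mul_eq (hf : Periodic f T) (n : ℕ) :
    ∫ x in 0..n * T, f x = n • ∫ x in 0..T, f x := by
  rcases eq_or_ne T 0 with rfl | hT
  · simp
  by_cases hint : IntervalIntegrable f volume 0 T
  · simpa using hf.intervalIntegral_add_zsmul_eq n 0 (hf.intervalIntegrable₀ hT hint)
  rcases eq_or_ne n 0 with rfl | hn
  · simp
  have hsub : Set.uIcc 0 T ⊆ Set.uIcc 0 (n * T) := by
    have : (1 : ℝ) ≤ n := Nat.one_le_cast.2 (Nat.one_le_iff_ne_zero.2 hn)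
    refine Set.uIcc_subset_uIcc Set.left_mem_uIcc ?_
    rcases le_total 0 T with h | h
    · exact Set.mem_uIcc.2 (Or.inl ⟨h, by nlinarith⟩)
    · exact Set.mem_uIcc.2 (Or.inr ⟨by nlinarith, h⟩)
  rw [intervalIntegral.integral_undef hint,
    intervalIntegral.integral_undef fun h ↦ hint (h.mono_set hsub), smul_zero]

theorem intervalIntegral_comp_mul_left (hf : Periodic f T) {n : ℕ} (hn : n ≠ 0) :
    ∫ x in 0..T, f (n * x) = ∫ x in 0..T, f x := by
  rw [intervalIntegral.integral_comp_mul_left f (Nat.cast_ne_zero.2 hn), mul_zero,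
    hf.intervalIntegral_nat_mul_eq, ← Nat.cast_smul_eq_nsmul ℝ,
    inv_smul_smul₀ (Nat.cast_ne_zero.2 hn)]

theorem intervalIntegral_comp_add_right (hf : Periodic f T) (c : ℝ) :
    ∫ x in 0..T, f (x + c) = ∫ x in 0..T, f x := by
  simpa [add_comm T c] using hf.intervalIntegral_add_eq c 0

end Function.Periodic

theorem Real.ae_sin_ne_zero : ∀ᵐ θ : ℝ, Real.sin θ ≠ 0 := by
  refine measure_mono_null (fun θ hθ ↦ ?_)
    ((Set.countable_range fun n : ℤ ↦ n * Real.pi).measure_zero volume)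
  simpa [Real.sin_eq_zero_iff] using hθ

namespace Complex

theorem exp_ofReal_mul_I_ne_one_and_ne_neg_one {θ : ℝ} (h : Real.sin θ ≠ 0) :
    exp (θ * I) ≠ 1 ∧ exp (θ * I) ≠ -1 := by
  constructor <;> intro he <;> apply h <;>
    simpa [exp_ofReal_mul_I_im] using congrArg im he

theorem norm_one_div_one_sub_sub_one_div_one_add {z : ℂ} (hz : ‖z‖ = 1) (h1 : z ≠ 1)
    (h2 : z ≠ -1) : ‖1 / (1 - z) - 1 / (1 + z)‖ = 2 * ‖1 / (1 - z ^ 2)‖ := by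
  have h1' : 1 - z ≠ 0 := sub_ne_zero.2 h1.symm
  have h2' : 1 + z ≠ 0 := fun h ↦ h2 (eq_neg_of_add_eq_zero_right h)
  have : 1 / (1 - z) - 1 / (1 + z) = 2 * z * (1 / (1 - z ^ 2)) := by
    rw [show 1 - z ^ 2 = (1 - z) * (1 + z) by ring]
    field_simp
    ring
  rw [this, norm_mul, norm_mul, hz, Complex.norm_two, mul_one]

variable {E : Type*} [NormedAddCommGroup E] [NormedSpace ℝ E]

theorem periodic_comp_exp_mul_I {α : Type*} (F : ℂ → α) :
    Function.Periodic (fun θ : ℝ ↦ F (exp (θ * I))) (2 * Real.pi) := by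
  intro θ
  push_cast
  exact congrArg F (exp_mul_I_periodic θ)

theorem intervalIntegral_comp_neg_exp_mul_I (F : ℂ → E) :
    ∫ θ in (0:ℝ)..(2 * Real.pi), F (-exp (θ * I)) =
      ∫ θ in (0:ℝ)..(2 * Real.pi), F (exp (θ * I)) := by
  rw [← (periodic_comp_exp_mul_I F).intervalIntegral_comp_add_right Real.pi]
  simp [add_mul, exp_add]

theorem intervalIntegral_comp_exp_mul_I_pow (F : ℂ → E) {n : ℕ} (hn : n ≠ 0) :
    ∫ θ in (0:ℝ)..(2 * Real.pi), F (exp (θ * I) ^ n) =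
      ∫ θ in (0:ℝ)..(2 * Real.pi), F (exp (θ * I)) := by
  rw [← (periodic_comp_exp_mul_I F).intervalIntegral_comp_mul_left hn]
  simp [← exp_nat_mul, mul_assoc]

end Complex

theorem hardy_triangle_equality_general (p : ℝ) (hp0 : 0 < p)
    (H K : ℝ → ℂ)
    (hH : ∀ θ : ℝ, H θ = 1 / (1 - Complex.exp (θ * Complex.I)))
    (hK : ∀ θ : ℝ, K θ = -(1 / (1 + Complex.exp (θ * Complex.I)))) :
    ((∫ θ in (0:ℝ)..(2 * Real.pi), ‖H θ + K θ‖ ^ p) / (2 * Real.pi)) ^ (1 / p) =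
      ((∫ θ in (0:ℝ)..(2 * Real.pi), ‖H θ‖ ^ p) / (2 * Real.pi)) ^ (1 / p) +
        ((∫ θ in (0:ℝ)..(2 * Real.pi), ‖K θ‖ ^ p) / (2 * Real.pi)) ^ (1 / p) := by
  have hKH : ∫ θ in (0:ℝ)..(2 * Real.pi), ‖K θ‖ ^ p =
      ∫ θ in (0:ℝ)..(2 * Real.pi), ‖H θ‖ ^ p := by
    simpa [hH, hK] using Complex.intervalIntegral_comp_neg_exp_mul_I fun z ↦ ‖1 / (1 - z)‖ ^ p
  have hHK : ∫ θ in (0:ℝ)..(2 * Real.pi), ‖H θ + K θ‖ ^ p =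
      2 ^ p * ∫ θ in (0:ℝ)..(2 * Real.pi), ‖H θ‖ ^ p := by
    simp only [hH, hK, ← intervalIntegral.integral_const_mul]
    rw [← Complex.intervalIntegral_comp_exp_mul_I_pow (fun z ↦ 2 ^ p * ‖1 / (1 - z)‖ ^ p)
      two_ne_zero]
    refine intervalIntegral.integral_congr_ae ?_
    filter_upwards [Real.ae_sin_ne_zero] with θ hθ _
    obtain ⟨h1, h2⟩ := Complex.exp_ofReal_mul_I_ne_one_and_ne_neg_one hθ
    rw [← sub_eq_add_neg, Complex.norm_one_div_one_sub_sub_one_div_one_add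
      (Complex.norm_exp_ofReal_mul_I θ) h1 h2, Real.mul_rpow zero_le_two (norm_nonneg _)]
  have hnonneg : 0 ≤ (∫ θ in (0:ℝ)..(2 * Real.pi), ‖H θ‖ ^ p) / (2 * Real.pi) :=
    div_nonneg (intervalIntegral.integral_nonneg Real.two_pi_pos.le fun _ _ ↦ by positivity)
      Real.two_pi_pos.le
  rw [hKH, hHK, mul_div_assoc, Real.mul_rpow (by positivity) hnonneg, one_div,
    Real.rpow_rpow_inv zero_le_two hp0.ne', two_mul]

/-- For `0 < p < 1`, the boundary functions `H(θ) = 1/(1-e^{iθ})` and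
`K(θ) = -1/(1+e^{iθ})` of `h(z)=1/(1-z)` and `k(z)=-h(-z)` satisfy equality
in the triangle inequality for the `H^p` quasinorm. -/
theorem hardy_triangle_equality (p : ℝ) (hp0 : 0 < p) (hp1 : p < 1)
    (H K : ℝ → ℂ)
    (hH : ∀ θ : ℝ, H θ = 1 / (1 - Complex.exp (θ * Complex.I)))
    (hK : ∀ θ : ℝ, K θ = -(1 / (1 + Complex.exp (θ * Complex.I)))) :
    ((∫ θ in (0:ℝ)..(2 * Real.pi), ‖H θ + K θ‖ ^ p) / (2 * Real.pi)) ^ (1 / p) =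
      ((∫ θ in (0:ℝ)..(2 * Real.pi), ‖H θ‖ ^ p) / (2 * Real.pi)) ^ (1 / p) +
        ((∫ θ in (0:ℝ)..(2 * Real.pi), ‖K θ‖ ^ p) / (2 * Real.pi)) ^ (1 / p) :=
  hardy_triangle_equality_general p hp0 H K hH hK
end

section
/- Let $0 < p < \frac12$. Define $f(z) = (1+z)^{4/p}$ and $g(z) = -f(-z) = -(1-z)^{4/p}$ on the unit disk $\mathbb{D}$, using the principal branch of the complex power (so that $1^{4/p} = 1$). Then $f$ and $g$ belong to the Bergman space $A^p$ and $\left(\int_{\mathbb{D}} |f(z)+g(z)|^p \, dA(z)\right)^{1/p} > \left(\int_{\mathbb{D}} |f(z)|^p \, dA(z)\right)^{1/p} + \left(\int_{\mathbb{D}} |g(z)|^p \, dA(z)\right)^{1/p}$, i.e., $f$ and $g$ fail the triangle inequality for $\|\cdot\|_{A^p}$. -/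
/-!
Since `t ↦ t ^ p` is subadditive for `0 < p ≤ 1`, `‖f + g‖ ^ p ≥ |‖f‖ ^ p - ‖g‖ ^ p|`.
Here `‖f‖ ^ p = ‖1 + z‖ ^ 4` and `‖g‖ ^ p = ‖1 - z‖ ^ 4`, whose difference is
`8 Re z (1 + ‖z‖ ^ 2)`. In polar coordinates `∫_𝔻 ‖1 ± z‖ ^ 4 dA = 10 / 3` and
`∫_𝔻 8 |Re z| (1 + ‖z‖ ^ 2) dA = 256 / (15π)`. Hence `‖f‖ + ‖g‖ = (2 ^ p · 10 / 3) ^ (1 / p)`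
while `‖f + g‖ ≥ (256 / (15π)) ^ (1 / p)`, and `2 ^ p · 10 / 3 < √2 · 10 / 3 < 256 / (15π)`.
-/

open MeasureTheory Real Set

theorem Real.abs_rpow_sub_rpow_le {q a b : ℝ} (hq0 : 0 ≤ q) (hq1 : q ≤ 1) (ha : 0 ≤ a)
    (hb : 0 ≤ b) : |a ^ q - b ^ q| ≤ |a - b| ^ q := by
  wlog hba : b ≤ a generalizing a b
  · rw [abs_sub_comm, abs_sub_comm a]
    exact this hb ha (le_of_not_ge hba)
  have hsub := rpow_add_le_add_rpow (sub_nonneg.2 hba) hb hq0 hq1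
  rw [sub_add_cancel] at hsub
  rw [abs_of_nonneg (sub_nonneg.2 hba), abs_of_nonneg (sub_nonneg.2 (rpow_le_rpow hb hba hq0))]
  linarith

theorem abs_norm_rpow_sub_norm_rpow_le {E : Type*} [SeminormedAddCommGroup E] {q : ℝ}
    (hq0 : 0 ≤ q) (hq1 : q ≤ 1) (u v : E) : |‖u‖ ^ q - ‖v‖ ^ q| ≤ ‖u - v‖ ^ q :=
  (Real.abs_rpow_sub_rpow_le hq0 hq1 (norm_nonneg u) (norm_nonneg v)).trans
    (rpow_le_rpow (abs_nonneg _) (abs_norm_sub_norm_le u v) hq0)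

theorem norm_add_rpow_le {E : Type*} [SeminormedAddCommGroup E] {q : ℝ} (hq0 : 0 ≤ q)
    (hq1 : q ≤ 1) (u v : E) : ‖u + v‖ ^ q ≤ ‖u‖ ^ q + ‖v‖ ^ q :=
  (rpow_le_rpow (norm_nonneg _) (norm_add_le u v) hq0).trans
    (rpow_add_le_add_rpow (norm_nonneg u) (norm_nonneg v) hq0 hq1)

theorem Real.rpow_one_div_add_self {p a : ℝ} (hp : p ≠ 0) (ha : 0 ≤ a) :
    a ^ (1 / p) + a ^ (1 / p) = (2 ^ p * a) ^ (1 / p) := by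
  rw [mul_rpow (by positivity) ha, ← rpow_mul zero_le_two, mul_one_div_cancel hp, rpow_one,
    two_mul]

theorem Complex.norm_cpow_ofReal_div_rpow (w : ℂ) (a : ℝ) {p : ℝ} (hp : p ≠ 0) :
    ‖w ^ ((a / p : ℝ) : ℂ)‖ ^ p = ‖w‖ ^ a := by
  rw [Complex.norm_cpow_real, ← rpow_mul (norm_nonneg w), div_mul_cancel₀ a hp]

theorem Continuous.integrableOn_ball {X E : Type*} [MeasurableSpace X] [MetricSpace X]
    [ProperSpace X] [OpensMeasurableSpace X] [NormedAddCommGroup E] {μ : Measure X}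
    [IsFiniteMeasureOnCompacts μ] {f : X → E} (hf : Continuous f) (x : X) (r : ℝ) :
    IntegrableOn f (Metric.ball x r) μ :=
  (hf.continuousOn.integrableOn_compact (isCompact_closedBall x r)).mono_set
    Metric.ball_subset_closedBall

theorem Complex.polarCoord_symm_eq_ofReal_mul_exp (q : ℝ × ℝ) :
    Complex.polarCoord.symm q = q.1 * Complex.exp (q.2 * Complex.I) := by
  rw [Complex.polarCoord_symm_apply, Complex.ofReal_cos, Complex.ofReal_sin, ← Complex.exp_mul_I]

theorem setIntegral_ball_zero_eq_polar {E : Type*} [NormedAddCommGroup E] [NormedSpace ℝ E]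
    {F : ℂ → E} (hF : Continuous F) {R : ℝ} (hR : 0 ≤ R) :
    ∫ z in Metric.ball (0 : ℂ) R, F z =
      ∫ r in 0..R, ∫ θ in -π..π, r • F (r * Complex.exp (θ * Complex.I)) := by
  have hpolar : ∀ q ∈ Ioi 0 ×ˢ Ioo (-π) π,
      q.1 • (Metric.ball (0 : ℂ) R).indicator F (Complex.polarCoord.symm q) =
        (Ioo 0 R ×ˢ Ioo (-π) π).indicator
          (fun q : ℝ × ℝ => q.1 • F (q.1 * Complex.exp (q.2 * Complex.I))) q := by
    rintro ⟨r, θ⟩ ⟨hr, hθ⟩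
    have hnorm : ‖(r : ℂ) * Complex.exp (θ * Complex.I)‖ = r := by
      simp [abs_of_pos (mem_Ioi.1 hr)]
    classical
    rw [Complex.polarCoord_symm_eq_ofReal_mul_exp, indicator_apply, indicator_apply]
    simp only [Metric.mem_ball, dist_zero_right, hnorm]
    simp [mem_Ioi.1 hr, hθ]
  have hint : IntegrableOn (fun q : ℝ × ℝ => q.1 • F (q.1 * Complex.exp (q.2 * Complex.I)))
      (Icc 0 R ×ˢ Icc (-π) π) :=
    (Continuous.continuousOn (by fun_prop)).integrableOn_compact (isCompact_Icc.prod isCompact_Icc)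
  rw [← integral_indicator measurableSet_ball, ← Complex.integral_comp_polarCoord_symm,
    polarCoord_target,
    setIntegral_congr_fun (measurableSet_Ioi.prod measurableSet_Ioo) hpolar,
    setIntegral_indicator (measurableSet_Ioo.prod measurableSet_Ioo),
    inter_eq_right.2 (prod_mono Ioo_subset_Ioi_self subset_rfl), Measure.volume_eq_prod,
    setIntegral_prod _ (hint.mono_set (prod_mono Ioo_subset_Icc_self Ioo_subset_Icc_self)),
    intervalIntegral.integral_of_le hR, integral_Ioc_eq_integral_Ioo]
  refine setIntegral_congr_fun measurableSet_Ioo fun r _ => ?_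
  rw [intervalIntegral.integral_of_le (by linarith [pi_pos]), integral_Ioc_eq_integral_Ioo]

theorem integral_abs_cos_neg_pi_pi : ∫ θ in -π..π, |cos θ| = 4 := by
  have hper : Function.Periodic (fun θ => |cos θ|) π := fun θ => by simp [cos_add_pi]
  have hint : ∀ a b, IntervalIntegrable (fun θ => |cos θ|) volume a b :=
    fun a b => (by fun_prop : Continuous _).intervalIntegrable a b
  have hhalf : ∫ θ in -(π / 2)..π / 2, |cos θ| = 2 := by
    rw [intervalIntegral.integral_congr (g := cos) fun θ hθ => abs_of_nonneg <|
      cos_nonneg_of_mem_Icc (by rwa [uIcc_of_le (by linarith [pi_pos])] at hθ), integral_cos]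
    norm_num
  calc ∫ θ in -π..π, |cos θ| = ∫ θ in -π..-π + (2 : ℤ) • π, |cos θ| := by
        norm_num; ring_nf
    _ = 2 * ∫ θ in -(π / 2)..-(π / 2) + π, |cos θ| := by
      rw [hper.intervalIntegral_add_zsmul_eq 2 (-π) hint,
        hper.intervalIntegral_add_eq (-π) (-(π / 2))]
      norm_num
    _ = 4 := by rw [show -(π / 2) + π = π / 2 by ring, hhalf]; norm_num

theorem setIntegral_ball_zero_comp_neg {E F : Type*} [NormedAddCommGroup E] [MeasurableSpace E]
    [BorelSpace E] [NormedAddCommGroup F] [NormedSpace ℝ F] (μ : Measure E) [μ.IsNegInvariant]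
    (G : E → F) (R : ℝ) :
    ∫ z in Metric.ball 0 R, G (-z) ∂μ = ∫ z in Metric.ball 0 R, G z ∂μ := by
  simpa [Set.neg_preimage, neg_ball] using
    (Measure.measurePreserving_neg μ).setIntegral_preimage_emb
      (MeasurableEquiv.neg E).measurableEmbedding G (Metric.ball 0 R)

theorem Complex.norm_one_add_ofReal_mul_exp_sq (r θ : ℝ) :
    ‖1 + r * Complex.exp (θ * Complex.I)‖ ^ 2 = 1 + 2 * r * Real.cos θ + r ^ 2 := by
  rw [Complex.sq_norm, Complex.normSq_apply]
  simp only [Complex.add_re, Complex.one_re, Complex.re_ofReal_mul, Complex.exp_ofReal_mul_I_re,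
    Complex.add_im, Complex.one_im, Complex.im_ofReal_mul, Complex.exp_ofReal_mul_I_im, zero_add]
  linear_combination r ^ 2 * Real.sin_sq_add_cos_sq θ

theorem Complex.norm_one_add_pow_four_sub_norm_one_sub_pow_four (z : ℂ) :
    ‖1 + z‖ ^ 4 - ‖1 - z‖ ^ 4 = 8 * z.re * (1 + ‖z‖ ^ 2) := by
  rw [show 4 = 2 * 2 by rfl, pow_mul, pow_mul, Complex.sq_norm, Complex.sq_norm, Complex.sq_norm]
  simp only [Complex.normSq_apply, Complex.add_re, Complex.sub_re, Complex.add_im, Complex.sub_im,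
    Complex.one_re, Complex.one_im]
  ring

theorem integral_ball_norm_one_add_pow_four :
    ∫ z in Metric.ball (0 : ℂ) 1, ‖1 + z‖ ^ 4 = 10 * π / 3 := by
  have hpolar (r θ : ℝ) : r • ‖1 + r * Complex.exp (θ * Complex.I)‖ ^ 4 =
      r * (1 + r ^ 2) ^ 2 + 4 * r ^ 2 * (1 + r ^ 2) * cos θ + 4 * r ^ 3 * cos θ ^ 2 := by
    rw [smul_eq_mul, show 4 = 2 * 2 by rfl, pow_mul, Complex.norm_one_add_ofReal_mul_exp_sq]
    ring
  have hinner (r : ℝ) : ∫ θ in -π..π, r • ‖1 + r * Complex.exp (θ * Complex.I)‖ ^ 4 =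
      π * (2 * r + 8 * r ^ 3 + 2 * r ^ 5) := by
    simp only [hpolar]
    simp (disch := apply Continuous.intervalIntegrable; fun_prop) only [
      intervalIntegral.integral_add, intervalIntegral.integral_const_mul,
      intervalIntegral.integral_const, smul_eq_mul, integral_cos, integral_cos_sq, sin_pi, sin_neg,
      cos_pi, cos_neg]
    ring
  rw [setIntegral_ball_zero_eq_polar (by fun_prop) zero_le_one]
  simp (disch := apply Continuous.intervalIntegrable; fun_prop) only [hinner,
    intervalIntegral.integral_add, intervalIntegral.integral_const_mul, integral_pow]
  rw [intervalIntegral.integral_const_mul, integral_id]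
  norm_num
  ring

theorem integral_ball_norm_one_sub_pow_four :
    ∫ z in Metric.ball (0 : ℂ) 1, ‖1 - z‖ ^ 4 = 10 * π / 3 := by
  simpa [← sub_eq_add_neg] using
    (setIntegral_ball_zero_comp_neg volume (fun z : ℂ => ‖1 + z‖ ^ 4) 1).trans
      integral_ball_norm_one_add_pow_four

theorem integral_ball_abs_norm_one_add_pow_four_sub :
    ∫ z in Metric.ball (0 : ℂ) 1, |‖1 + z‖ ^ 4 - ‖1 - z‖ ^ 4| = 256 / 15 := by
  have hpolar (r θ : ℝ) (hr : 0 ≤ r) :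
      r • |‖1 + r * Complex.exp (θ * Complex.I)‖ ^ 4 -
          ‖1 - r * Complex.exp (θ * Complex.I)‖ ^ 4| = 8 * r ^ 2 * (1 + r ^ 2) * |cos θ| := by
    rw [Complex.norm_one_add_pow_four_sub_norm_one_sub_pow_four]
    simp only [Complex.re_ofReal_mul, Complex.exp_ofReal_mul_I_re, Complex.norm_mul,
      Complex.norm_real, Complex.norm_exp_ofReal_mul_I, norm_eq_abs, abs_of_nonneg hr, mul_one,
      abs_mul, abs_of_pos (by positivity : 0 < 1 + r ^ 2), abs_of_pos (by norm_num : (0 : ℝ) < 8),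
      smul_eq_mul]
    ring
  rw [setIntegral_ball_zero_eq_polar (by fun_prop) zero_le_one,
    intervalIntegral.integral_congr (g := fun r => 32 * r ^ 2 + 32 * r ^ 4)]
  · simp (disch := apply Continuous.intervalIntegrable; fun_prop) only [
      intervalIntegral.integral_add, intervalIntegral.integral_const_mul, integral_pow]
    norm_num
  · intro r hr
    rw [uIcc_of_le zero_le_one] at hr
    simp only [hpolar _ _ hr.1, intervalIntegral.integral_const_mul, integral_abs_cos_neg_pi_pi]
    ring

/-- For `0 < p < 1/2`, the functions `f(z) = (1+z)^{4/p}` and `g(z) = -f(-z) = -(1-z)^{4/p}`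
(principal branches) belong to the Bergman space `A^p` but fail the triangle
inequality for `‖·‖_{A^p}`. -/
theorem bergman_triangle_fails_small_p (p : ℝ) (hp0 : 0 < p) (hp1 : p < 1 / 2)
    (f g : ℂ → ℂ)
    (hf : ∀ z : ℂ, f z = (1 + z) ^ ((4 / p : ℝ) : ℂ))
    (hg : ∀ z : ℂ, g z = -((1 - z) ^ ((4 / p : ℝ) : ℂ))) :
    MeasureTheory.IntegrableOn (fun z => ‖f z‖ ^ p) {z : ℂ | ‖z‖ < 1} ∧
    MeasureTheory.IntegrableOn (fun z => ‖g z‖ ^ p) {z : ℂ | ‖z‖ < 1} ∧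
    ((∫ z in {z : ℂ | ‖z‖ < 1}, ‖f z + g z‖ ^ p) / Real.pi) ^ (1 / p) >
      ((∫ z in {z : ℂ | ‖z‖ < 1}, ‖f z‖ ^ p) / Real.pi) ^ (1 / p) +
        ((∫ z in {z : ℂ | ‖z‖ < 1}, ‖g z‖ ^ p) / Real.pi) ^ (1 / p) := by
  have hp1' : p ≤ 1 := by linarith
  have hf_pow (z : ℂ) : ‖f z‖ ^ p = ‖1 + z‖ ^ 4 := by
    rw [hf, Complex.norm_cpow_ofReal_div_rpow _ _ hp0.ne']
    norm_cast
  have hg_pow (z : ℂ) : ‖g z‖ ^ p = ‖1 - z‖ ^ 4 := by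
    rw [hg, norm_neg, Complex.norm_cpow_ofReal_div_rpow _ _ hp0.ne']
    norm_cast
  have hfg_lower (z : ℂ) : |‖1 + z‖ ^ 4 - ‖1 - z‖ ^ 4| ≤ ‖f z + g z‖ ^ p := by
    simpa [hf_pow, hg_pow] using abs_norm_rpow_sub_norm_rpow_le hp0.le hp1' (f z) (-g z)
  have hfg_int : IntegrableOn (fun z => ‖f z + g z‖ ^ p) (Metric.ball 0 1) := by
    have hcont : Continuous fun z : ℂ => ‖1 + z‖ ^ 4 + ‖1 - z‖ ^ 4 := by fun_prop
    refine Integrable.mono' (hcont.integrableOn_ball 0 1) ?_ (ae_of_all _ fun z => ?_)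
    · simp only [hf, hg]
      exact Measurable.aestronglyMeasurable (by fun_prop)
    · rw [norm_of_nonneg (by positivity), ← hf_pow, ← hg_pow]
      exact norm_add_rpow_le hp0.le hp1' _ _
  have hlower : 256 / 15 ≤ ∫ z in Metric.ball 0 1, ‖f z + g z‖ ^ p :=
    integral_ball_abs_norm_one_add_pow_four_sub ▸
      setIntegral_mono (Continuous.integrableOn_ball (by fun_prop) 0 1) hfg_int hfg_lower
  have htwo : 2 ^ p < (3 / 2 : ℝ) := by
    calc (2 : ℝ) ^ p < 2 ^ (1 / 2 : ℝ) := rpow_lt_rpow_of_exponent_lt one_lt_two hp1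
      _ = √2 := (sqrt_eq_rpow 2).symm
      _ < 3 / 2 := sqrt_two_lt_three_halves
  have hnorm :
      2 ^ p * (10 * π / 3 / π) < (∫ z in Metric.ball 0 1, ‖f z + g z‖ ^ p) / π := by
    rw [show 10 * π / 3 / π = 10 / 3 by field_simp, lt_div_iff₀ pi_pos]
    nlinarith [hlower, mul_lt_mul'' htwo pi_lt_d2 (by positivity) pi_pos.le]
  rw [← ball_zero_eq]
  simp only [hf_pow, hg_pow, integral_ball_norm_one_add_pow_four,
    integral_ball_norm_one_sub_pow_four]
  refine ⟨Continuous.integrableOn_ball (by fun_prop) 0 1,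
    Continuous.integrableOn_ball (by fun_prop) 0 1, ?_⟩
  rw [gt_iff_lt, Real.rpow_one_div_add_self hp0.ne' (by positivity)]
  exact rpow_lt_rpow (by positivity) hnorm (by positivity)
end
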